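/- arXiv:2108.02084 — 2 statements merged into one kernel-verified Lean document; each statement's English description precedes it below -/
import Mathlib

section
/- The exponential mechanism satisfies ε-differential privacy: if for input x and output y ∈ Y the mechanism outputs y with probability exp(ε·q(x,y)/(2Δ)) / Σ_{y'∈Y} exp(ε·q(x,y')/(2Δ)), where Δ = max over inputs x,x' and outputs y of |q(x,y) − q(x',y)|, then for any two inputs x, x' and any output y, Pr[M(x)=y] / Pr[M(x')=y] ≤ e^ε. -/
open Finset

/-- The exponential mechanism satisfies ε-differential privacy. -/
theorem exp_mech_eps_dp {X Y : Type*} [Fintype Y] [Nonempty Y]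
    (q : X → Y → ℝ) (Δ ε : ℝ) (hΔ : 0 < Δ) (hε : 0 < ε)
    (hsens : ∀ x x' : X, ∀ y : Y, |q x y - q x' y| ≤ Δ)
    (M : X → Y → ℝ)
    (hM : ∀ x y, M x y =
      Real.exp (ε * q x y / (2 * Δ)) / ∑ y' : Y, Real.exp (ε * q x y' / (2 * Δ))) :
    ∀ x x' : X, ∀ y : Y, M x y / M x' y ≤ Real.exp ε := by
  intro x x' y
  have hratio : ∀ a b : X, ∀ z : Y,
      Real.exp (ε * q a z / (2 * Δ)) ≤ Real.exp (ε / 2) * Real.exp (ε * q b z / (2 * Δ)) := by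
    intro a b z
    rw [← Real.exp_add, Real.exp_le_exp]
    have h := (abs_le.mp (hsens a b z)).2
    have : ε * q a z / (2 * Δ) - ε * q b z / (2 * Δ) ≤ ε / 2 := by
      rw [div_sub_div_same, ← mul_sub, div_le_div_iff₀ (by positivity) (by norm_num)]
      calc ε * (q a z - q b z) * 2 ≤ ε * Δ * 2 := by nlinarith
        _ = ε * (2 * Δ) := by ring
    linarith
  set S := fun a : X => ∑ y' : Y, Real.exp (ε * q a y' / (2 * Δ)) with hS
  have hSpos : ∀ a, 0 < S a := fun a =>
    Finset.sum_pos (fun i _ => Real.exp_pos _) univ_nonempty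
  have hSle : S x' ≤ Real.exp (ε / 2) * S x := by
    rw [Finset.mul_sum]
    exact Finset.sum_le_sum fun i _ => hratio x' x i
  rw [hM, hM]
  change Real.exp (ε * q x y / (2 * Δ)) / S x / (Real.exp (ε * q x' y / (2 * Δ)) / S x') ≤ _
  rw [div_div_div_comm, div_le_iff₀ (by positivity)]
  have h1 := hratio x x' y
  have h2 := hSle
  have hB := (Real.exp_pos (ε * q x' y / (2 * Δ))).le
  have hSx := (hSpos x).le
  calc Real.exp (ε * q x y / (2 * Δ)) / Real.exp (ε * q x' y / (2 * Δ))
      ≤ Real.exp (ε / 2) := by rw [div_le_iff₀ (Real.exp_pos _)]; exact h1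
    _ = Real.exp ε * Real.exp (-(ε / 2)) := by rw [← Real.exp_add]; ring_nf
    _ ≤ Real.exp ε * (S x / S x') := by
        gcongr
        rw [le_div_iff₀ (hSpos x')]
        have : Real.exp (-(ε / 2)) * (Real.exp (ε / 2) * S x) = S x := by
          rw [← mul_assoc, ← Real.exp_add]; simp
        calc Real.exp (-(ε / 2)) * S x' ≤ Real.exp (-(ε / 2)) * (Real.exp (ε / 2) * S x) := by
              gcongr
          _ = S x := this
end

section
/- Utility of the exponential mechanism: for the exponential mechanism M with quality function q, sensitivity Δ, privacy budget ε, and finite output set Y, letting OPT = max_{y∈Y} q(x,y) and Y_OPT = {y ∈ Y : q(x,y) = OPT}, for any ζ ≥ 0 we have Pr[q(x, M(x)) ≤ OPT − (2Δ/ε)(ln(|Y|/|Y_OPT|) + ζ)] ≤ e^{−ζ}. -/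
open Finset

/-- Utility of the exponential mechanism. -/
theorem exp_mech_utility {X Y : Type*} [Fintype Y] [Nonempty Y] [DecidableEq Y]
    (q : X → Y → ℝ) (Δ ε : ℝ) (hΔ : 0 < Δ) (hε : 0 < ε)
    (M : X → Y → ℝ)
    (hM : ∀ x y, M x y =
      Real.exp (ε * q x y / (2 * Δ)) / ∑ y' : Y, Real.exp (ε * q x y' / (2 * Δ)))
    (x : X) (ζ : ℝ) (hζ : 0 ≤ ζ) :
    let OPT := Finset.univ.sup' Finset.univ_nonempty (fun y => q x y)
    let YOPT := Finset.univ.filter (fun y => q x y = OPT)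
    (∑ y ∈ Finset.univ.filter
        (fun y => q x y ≤ OPT - (2 * Δ / ε) *
          (Real.log ((Fintype.card Y : ℝ) / (YOPT.card : ℝ)) + ζ)), M x y)
      ≤ Real.exp (-ζ) := by
  intro OPT YOPT
  set c := ε / (2 * Δ) with hc
  have h2Δ : (0:ℝ) < 2 * Δ := by linarith
  have hc0 : 0 < c := div_pos hε h2Δ
  have hkey : ∀ y, ε * q x y / (2 * Δ) = c * q x y := by
    intro y; rw [hc]; ring
  have hYOPT : YOPT.Nonempty := by
    obtain ⟨y, _, hy⟩ := Finset.exists_mem_eq_sup' Finset.univ_nonempty (fun y => q x y)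
    exact ⟨y, Finset.mem_filter.mpr ⟨Finset.mem_univ y, hy.symm⟩⟩
  have hk0 : (0:ℝ) < YOPT.card := by exact_mod_cast Finset.card_pos.mpr hYOPT
  have hY0 : (0:ℝ) < Fintype.card Y := by exact_mod_cast Fintype.card_pos
  have hratio : (0:ℝ) < (Fintype.card Y : ℝ) / YOPT.card := div_pos hY0 hk0
  set r := (Fintype.card Y : ℝ) / (YOPT.card : ℝ) with hr
  set t := OPT - (2 * Δ / ε) * (Real.log r + ζ) with ht
  set S := ∑ y' : Y, Real.exp (ε * q x y' / (2 * Δ)) with hS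
  have hSlb : (YOPT.card : ℝ) * Real.exp (c * OPT) ≤ S := by
    have heq : ∑ y ∈ YOPT, Real.exp (ε * q x y / (2 * Δ))
        = (YOPT.card : ℝ) * Real.exp (c * OPT) := by
      rw [Finset.sum_congr rfl fun y hy => by
        rw [hkey, (Finset.mem_filter.mp hy).2]]
      rw [Finset.sum_const, nsmul_eq_mul]
    calc (YOPT.card : ℝ) * Real.exp (c * OPT)
        = ∑ y ∈ YOPT, Real.exp (ε * q x y / (2 * Δ)) := heq.symm
      _ ≤ S := Finset.sum_le_sum_of_subset_of_nonneg (Finset.filter_subset _ _)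
          (fun _ _ _ => (Real.exp_pos _).le)
  have hS0 : 0 < S := lt_of_lt_of_le (by positivity) hSlb
  set B := Finset.univ.filter (fun y => q x y ≤ t) with hB
  have hsum : (∑ y ∈ B, M x y) = (∑ y ∈ B, Real.exp (c * q x y)) / S := by
    rw [Finset.sum_div]
    exact Finset.sum_congr rfl fun y _ => by rw [hM, hkey]
  rw [hsum, div_le_iff₀ hS0]
  have hnum : (∑ y ∈ B, Real.exp (c * q x y)) ≤ (Fintype.card Y : ℝ) * Real.exp (c * t) := by
    calc (∑ y ∈ B, Real.exp (c * q x y)) ≤ ∑ _y ∈ B, Real.exp (c * t) := by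
          refine Finset.sum_le_sum fun y hy => Real.exp_le_exp.mpr ?_
          exact mul_le_mul_of_nonneg_left (Finset.mem_filter.mp hy).2 hc0.le
      _ = (B.card : ℝ) * Real.exp (c * t) := by rw [Finset.sum_const, nsmul_eq_mul]
      _ ≤ (Fintype.card Y : ℝ) * Real.exp (c * t) := by
          have : (B.card : ℝ) ≤ Fintype.card Y := by
            exact_mod_cast Finset.card_le_card (Finset.subset_univ B)
          exact mul_le_mul_of_nonneg_right this (Real.exp_pos _).le
  have hct : c * t = c * OPT - (Real.log r + ζ) := by
    rw [ht, hc]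
    field_simp
  have hfinal : (Fintype.card Y : ℝ) * Real.exp (c * t)
      = Real.exp (-ζ) * ((YOPT.card : ℝ) * Real.exp (c * OPT)) := by
    rw [hct, show c * OPT - (Real.log r + ζ) = (-ζ) + (c * OPT + (- Real.log r)) by ring,
      Real.exp_add, Real.exp_add, Real.exp_neg (Real.log r), Real.exp_log hratio, hr]
    field_simp
  calc (∑ y ∈ B, Real.exp (c * q x y)) ≤ (Fintype.card Y : ℝ) * Real.exp (c * t) := hnum
    _ = Real.exp (-ζ) * ((YOPT.card : ℝ) * Real.exp (c * OPT)) := hfinal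
    _ ≤ Real.exp (-ζ) * S := mul_le_mul_of_nonneg_left hSlb (Real.exp_pos _).le
end
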